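/- arXiv:2309.00478 — 3 statements merged into one kernel-verified Lean document; each statement's English description precedes it below -/
import Mathlib

section
/- Let A be an essentially at most unary algebra with at least two elements, i.e., the clone of term operations of A is generated by its unary operations. Then the clone of polynomial operations of A is not equationally additive; in particular, Δ_A = {(x1,x2,x3,x4) ∈ A^4 : x1 = x2 or x3 = x4} is not the solution set of any system of equations between quaternary polynomial operations of A. -/
/-- A clone on a set `A`: a family of finitary operations containing all
projections and closed under composition. -/
structure Clone (A : Type) where
  ops : ∀ n : ℕ, Set ((Fin n → A) → A)
  proj_mem : ∀ (n : ℕ) (i : Fin n), (fun x => x i) ∈ ops n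
  comp_mem : ∀ (m n : ℕ) (f : (Fin n → A) → A) (g : Fin n → (Fin m → A) → A),
      f ∈ ops n → (∀ i, g i ∈ ops m) → (fun x => f (fun i => g i x)) ∈ ops m

/-- `X ⊆ A^n` is algebraic w.r.t. a family of operations `F`: it is the solution
set of some system of equations between `n`-ary members of `F`. -/
def IsAlgSet {A : Type} (F : ∀ n : ℕ, Set ((Fin n → A) → A)) (n : ℕ)
    (X : Set (Fin n → A)) : Prop :=
  ∃ (I : Type) (p q : I → (Fin n → A) → A),
    (∀ i, p i ∈ F n) ∧ (∀ i, q i ∈ F n) ∧ X = {x | ∀ i, p i x = q i x}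

/-- Equational additivity: unions of algebraic sets of the same arity are algebraic. -/
def EqAdditive {A : Type} (F : ∀ n : ℕ, Set ((Fin n → A) → A)) : Prop :=
  ∀ (n : ℕ) (X Y : Set (Fin n → A)),
    IsAlgSet F n X → IsAlgSet F n Y → IsAlgSet F n (X ∪ Y)

/-- The quaternary relation `Δ_A`. -/
def Delta (A : Type) : Set (Fin 4 → A) := {x | x 0 = x 1 ∨ x 2 = x 3}
/-- Polynomial operations over a clone: generated by the clone, the constants
and the projections, closed under composition. -/
inductive PolyOp {A : Type} (C : Clone A) : ∀ n : ℕ, ((Fin n → A) → A) → Prop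
  | base {n : ℕ} {f : (Fin n → A) → A} : f ∈ C.ops n → PolyOp C n f
  | const {n : ℕ} (a : A) : PolyOp C n (fun _ => a)
  | proj {n : ℕ} (i : Fin n) : PolyOp C n (fun x => x i)
  | comp {m n : ℕ} {f : (Fin n → A) → A} {g : Fin n → (Fin m → A) → A} :
      PolyOp C n f → (∀ i, PolyOp C m (g i)) → PolyOp C m (fun x => f (fun i => g i x))

/-- The clone of polynomial operations of the algebra `(A; C)`. -/
def PolClone {A : Type} (C : Clone A) : Clone A where
  ops n := {f | PolyOp C n f}
  proj_mem n i := PolyOp.proj i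
  comp_mem _ _ _ _ hf hg := PolyOp.comp hf hg

/-- A congruence of the algebra `(A; C)`: an equivalence relation compatible
with all operations of the clone. -/
def IsCong {A : Type} (C : Clone A) (θ : A → A → Prop) : Prop :=
  Equivalence θ ∧ ∀ (n : ℕ) (f : (Fin n → A) → A), f ∈ C.ops n →
    ∀ x y : Fin n → A, (∀ i, θ (x i) (y i)) → θ (f x) (f y)

/-- `d` is a Mal'cev operation. -/
def IsMalcev {A : Type} (d : A → A → A → A) : Prop :=
  ∀ a b : A, d a b b = a ∧ d b b a = a

/-- The algebra `(A; C)` has a Mal'cev polynomial. -/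
def HasMalcevPoly {A : Type} (C : Clone A) : Prop :=
  ∃ d : A → A → A → A,
    (fun x : Fin 3 → A => d (x 0) (x 1) (x 2)) ∈ (PolClone C).ops 3 ∧ IsMalcev d

/-- `α` centralizes `β` modulo `η` (the term condition). -/
def Centralizes {A : Type} (C : Clone A) (α β η : A → A → Prop) : Prop :=
  ∀ (m k : ℕ) (p : (Fin (m + k) → A) → A), p ∈ (PolClone C).ops (m + k) →
    ∀ (a b : Fin m → A) (u v : Fin k → A),
      (∀ i, α (a i) (b i)) → (∀ i, β (u i) (v i)) →
      η (p (Fin.append a u)) (p (Fin.append a v)) →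
      η (p (Fin.append b u)) (p (Fin.append b v))

/-- The term condition commutator `[α, β]`: the least congruence `η` such that
`α` centralizes `β` modulo `η` (realized as the intersection of all such). -/
def CommRel {A : Type} (C : Clone A) (α β : A → A → Prop) (x y : A) : Prop :=
  ∀ η : A → A → Prop, IsCong C η → Centralizes C α β η → η x y

/-- The congruence of `(A; C)` generated by a binary relation `r`. -/
def CongGen {A : Type} (C : Clone A) (r : A → A → Prop) (x y : A) : Prop :=
  ∀ θ : A → A → Prop, IsCong C θ → (∀ a b, r a b → θ a b) → θ x y

/-! Every polynomial operation of an essentially unary algebra depends on at most one variable,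
so along any two-parameter grid `(s, t) ↦ γ s t` whose coordinates each move with only one
parameter, each side of an equation is a function of `s` alone or of `t` alone. An equation that
holds at three corners `(a,a), (b,a), (a,b)` of such a grid then holds at the fourth `(b,b)`.
The grid `(s, t) ↦ (a, s, a, t)` has its first three corners in `Δ_A` but not the fourth. -/

def DependsOnAtMostOneArg {A B : Type} (g : A → A → B) : Prop :=
  (∃ φ : A → B, ∀ s t, g s t = φ s) ∨ ∃ ψ : A → B, ∀ s t, g s t = ψ t

namespace DependsOnAtMostOneArg

variable {A B : Type}

lemma const (c : B) : DependsOnAtMostOneArg fun _ _ : A => c :=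
  .inl ⟨fun _ => c, fun _ _ => rfl⟩

lemma comp {g : A → A → B} (hg : DependsOnAtMostOneArg g) {C : Type} (u : B → C) :
    DependsOnAtMostOneArg fun s t => u (g s t) := by
  rcases hg with ⟨φ, hφ⟩ | ⟨ψ, hψ⟩
  · exact .inl ⟨u ∘ φ, fun s t => by simp [hφ]⟩
  · exact .inr ⟨u ∘ ψ, fun s t => by simp [hψ]⟩

lemma eq_of_three_corners {g h : A → A → B} (hg : DependsOnAtMostOneArg g)
    (hh : DependsOnAtMostOneArg h) {a b : A} (haa : g a a = h a a) (hba : g b a = h b a)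
    (hab : g a b = h a b) : g b b = h b b := by
  rcases hg with ⟨φ, hφ⟩ | ⟨φ, hφ⟩ <;> rcases hh with ⟨ψ, hψ⟩ | ⟨ψ, hψ⟩ <;>
    simp only [hφ, hψ] at haa hba hab ⊢
  exacts [hba, hba.trans (haa.symm.trans hab), hab.trans (haa.symm.trans hba), hab]

end DependsOnAtMostOneArg

lemma PolyOp.dependsOnAtMostOneArg_comp {A : Type} {C : Clone A}
    (hu : ∀ (n : ℕ) (f : (Fin n → A) → A), f ∈ C.ops n →
      ∃ (i : Fin n) (u : A → A), f = fun x => u (x i))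
    {n : ℕ} {f : (Fin n → A) → A} (hf : PolyOp C n f) :
    ∀ γ : A → A → Fin n → A, (∀ i, DependsOnAtMostOneArg fun s t => γ s t i) →
      DependsOnAtMostOneArg fun s t => f (γ s t) := by
  induction hf with
  | base hf =>
    intro γ hγ
    obtain ⟨i, u, rfl⟩ := hu _ _ hf
    exact (hγ i).comp u
  | const c => exact fun _ _ => .const c
  | proj i => exact fun _ hγ => hγ i
  | comp _ _ ihf ihg => exact fun γ hγ => ihf _ fun i => ihg i γ hγ

lemma IsAlgSet.mem_of_grid {A : Type} {C : Clone A}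
    (hu : ∀ (n : ℕ) (f : (Fin n → A) → A), f ∈ C.ops n →
      ∃ (i : Fin n) (u : A → A), f = fun x => u (x i))
    {n : ℕ} {X : Set (Fin n → A)} (hX : IsAlgSet (PolClone C).ops n X)
    (γ : A → A → Fin n → A) (hγ : ∀ i, DependsOnAtMostOneArg fun s t => γ s t i) {a b : A}
    (haa : γ a a ∈ X) (hba : γ b a ∈ X) (hab : γ a b ∈ X) : γ b b ∈ X := by
  obtain ⟨I, p, q, hp, hq, rfl⟩ := hX
  exact fun i => ((hp i).dependsOnAtMostOneArg_comp hu γ hγ).eq_of_three_corners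
    ((hq i).dependsOnAtMostOneArg_comp hu γ hγ) (haa i) (hba i) (hab i)

lemma isAlgSet_setOf_eq {A : Type} (C : Clone A) {n : ℕ} (i j : Fin n) :
    IsAlgSet C.ops n {x | x i = x j} :=
  ⟨Unit, fun _ x => x i, fun _ x => x j, fun _ => C.proj_mem n i, fun _ => C.proj_mem n j,
    by simp⟩

/-- If every term operation of an algebra with at least two elements is
essentially at most unary, then the clone of polynomial operations is not
equationally additive; in particular `Δ_A` is not the solution set of a system
of equations between quaternary polynomial operations. -/
theorem stmt3 {A : Type} (C : Clone A) (h2 : ∃ a b : A, a ≠ b)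
    (hu : ∀ (n : ℕ) (f : (Fin n → A) → A), f ∈ C.ops n →
      ∃ (i : Fin n) (u : A → A), f = fun x => u (x i)) :
    ¬ EqAdditive (PolClone C).ops ∧ ¬ IsAlgSet (PolClone C).ops 4 (Delta A) := by
  obtain ⟨a, b, hab⟩ := h2
  have hDelta : ¬ IsAlgSet (PolClone C).ops 4 (Delta A) := fun hX => by
    have hγ : ∀ i, DependsOnAtMostOneArg fun s t : A => ![a, s, a, t] i := by
      intro i
      fin_cases i
      exacts [.const a, .inl ⟨id, fun _ _ => rfl⟩, .const a, .inr ⟨id, fun _ _ => rfl⟩]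
    have := hX.mem_of_grid hu (fun s t => ![a, s, a, t]) hγ (a := a) (b := b)
      (by simp [Delta]) (by simp [Delta]) (by simp [Delta])
    simp [Delta, hab] at this
  exact ⟨fun hadd => hDelta (hadd 4 _ _ (isAlgSet_setOf_eq _ 0 1) (isAlgSet_setOf_eq _ 2 3)),
    hDelta⟩
end

section
/- Let A be an algebra with a Mal'cev polynomial d such that for all congruences α, β of A strictly above the equality relation, the commutator [α, β] is strictly above the equality relation. Then the clone of polynomial operations of A is equationally additive: for every n and all sets B, C ⊆ A^n algebraic with respect to the polynomial clone, B ∪ C is algebraic with respect to the polynomial clone. -/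
def Cg {A : Type} (C : Clone A) (x y : A) : A → A → Prop :=
  CongGen C fun a b => a = x ∧ b = y

def IsUnaryPoly {A : Type} (C : Clone A) (p : A → A) : Prop :=
  PolyOp C 1 fun v => p (v 0)

section Algebraic

variable {A : Type}

theorem IsAlgSet.iInter {F : ∀ n : ℕ, Set ((Fin n → A) → A)} {n : ℕ} {ι : Type}
    {X : ι → Set (Fin n → A)} (hX : ∀ t, IsAlgSet F n (X t)) :
    IsAlgSet F n (⋂ t, X t) := by
  choose I p q hp hq hXe using hX
  refine ⟨Σ t, I t, fun s => p s.1 s.2, fun s => q s.1 s.2,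
    fun s => hp s.1 s.2, fun s => hq s.1 s.2, ?_⟩
  ext x
  simp [hXe, Sigma.forall]

theorem IsAlgSet.preimage {F : Clone A} {m n : ℕ} {X : Set (Fin m → A)}
    (hX : IsAlgSet F.ops m X) {g : Fin m → (Fin n → A) → A} (hg : ∀ k, g k ∈ F.ops n) :
    IsAlgSet F.ops n ((fun x k => g k x) ⁻¹' X) := by
  obtain ⟨I, p, q, hp, hq, rfl⟩ := hX
  exact ⟨I, fun i x => p i fun k => g k x, fun i x => q i fun k => g k x,
    fun i => F.comp_mem _ _ _ _ (hp i) hg, fun i => F.comp_mem _ _ _ _ (hq i) hg, rfl⟩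

theorem isAlgSet_of_identities {F : ∀ n : ℕ, Set ((Fin n → A) → A)} {n : ℕ}
    {X : Set (Fin n → A)}
    (hX : ∀ z, (∀ p ∈ F n, ∀ q ∈ F n, (∀ x ∈ X, p x = q x) → p z = q z) → z ∈ X) :
    IsAlgSet F n X := by
  refine ⟨{pq : ((Fin n → A) → A) × ((Fin n → A) → A) //
      pq.1 ∈ F n ∧ pq.2 ∈ F n ∧ ∀ x ∈ X, pq.1 x = pq.2 x},
    fun i => i.1.1, fun i => i.1.2, fun i => i.2.1, fun i => i.2.2.1, ?_⟩
  ext z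
  exact ⟨fun hz i => i.2.2.2 z hz,
    fun hz => hX z fun p hp q hq hpq => hz ⟨(p, q), hp, hq, hpq⟩⟩

theorem union_eq_iInter_preimage_delta {n : ℕ} {I J : Type}
    (p q : I → (Fin n → A) → A) (r s : J → (Fin n → A) → A) :
    {x | ∀ i, p i x = q i x} ∪ {x | ∀ j, r j x = s j x} =
      ⋂ ij : I × J, (fun x k => ![p ij.1, q ij.1, r ij.2, s ij.2] k x) ⁻¹' Delta A := by
  ext x
  simp [Delta, Prod.forall, forall_or_left, forall_or_right]

theorem eqAdditive_of_isAlgSet_delta (F : Clone A) (hΔ : IsAlgSet F.ops 4 (Delta A)) :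
    EqAdditive F.ops := by
  rintro n _ _ ⟨I, p, q, hp, hq, rfl⟩ ⟨J, r, s, hr, hs, rfl⟩
  rw [union_eq_iInter_preimage_delta]
  refine IsAlgSet.iInter fun ij => hΔ.preimage fun k => ?_
  fin_cases k
  exacts [hp ij.1, hq ij.1, hr ij.2, hs ij.2]

end Algebraic

section Polynomial

variable {A : Type} {C : Clone A}

theorem IsUnaryPoly.comp_proj {p : A → A} (hp : IsUnaryPoly C p) {n : ℕ} (i : Fin n) :
    PolyOp C n fun x => p (x i) :=
  PolyOp.comp hp fun _ => PolyOp.proj i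

theorem PolyOp.comp₃ {d : A → A → A → A} (hd : PolyOp C 3 fun v => d (v 0) (v 1) (v 2))
    {n : ℕ} {f₁ f₂ f₃ : (Fin n → A) → A}
    (h₁ : PolyOp C n f₁) (h₂ : PolyOp C n f₂) (h₃ : PolyOp C n f₃) :
    PolyOp C n fun x => d (f₁ x) (f₂ x) (f₃ x) :=
  PolyOp.comp (g := ![f₁, f₂, f₃]) hd fun i => by fin_cases i <;> assumption

theorem PolyOp.comp_append {m k : ℕ} {p : (Fin (m + k) → A) → A} (hp : PolyOp C (m + k) p)
    {P : Fin m → A → A} {Q : Fin k → A → A}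
    (hP : ∀ i, IsUnaryPoly C (P i)) (hQ : ∀ j, IsUnaryPoly C (Q j)) {n : ℕ} (i₁ i₂ : Fin n) :
    PolyOp C n fun x => p (Fin.append (fun i => P i (x i₁)) (fun j => Q j (x i₂))) := by
  have h := PolyOp.comp
    (g := Fin.append (fun i (x : Fin n → A) => P i (x i₁)) (fun j x => Q j (x i₂))) hp
    (Fin.addCases (by simpa using fun i => (hP i).comp_proj i₁)
      (by simpa using fun j => (hQ j).comp_proj i₂))
  convert h using 3 with x
  funext l
  refine Fin.addCases (fun i => ?_) (fun j => ?_) l <;> simp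

end Polynomial

section Congruence

variable {A : Type} {C : Clone A}

theorem isCong_eq : IsCong C (· = ·) :=
  ⟨eq_equivalence, fun _ _ _ _ _ hxy => congrArg _ (funext hxy)⟩

theorem isCong_congGen (r : A → A → Prop) : IsCong C (CongGen C r) :=
  ⟨⟨fun x _ hθ _ => hθ.1.refl x,
    fun h θ hθ hr => hθ.1.symm (h θ hθ hr),
    fun h h' θ hθ hr => hθ.1.trans (h θ hθ hr) (h' θ hθ hr)⟩,
   fun n f hf x y hxy θ hθ hr => hθ.2 n f hf x y fun i => hxy i θ hθ hr⟩

theorem cg_self (x y : A) : Cg C x y x y :=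
  fun _ _ hr => hr x y ⟨rfl, rfl⟩

/-- `d (p x) (p t) (p y)` witnesses symmetry and, when `p y = q x`, `d (p t) (p y) (q t)`
witnesses transitivity. -/
theorem isCong_unaryPolyImage {d : A → A → A → A} (hd : PolyOp C 3 fun v => d (v 0) (v 1) (v 2))
    (hMd : IsMalcev d) (x y : A) :
    IsCong C fun c e => ∃ p, IsUnaryPoly C p ∧ c = p x ∧ e = p y := by
  refine ⟨⟨fun c => ⟨fun _ => c, PolyOp.const c, rfl, rfl⟩, ?_, ?_⟩, ?_⟩
  · rintro c e ⟨p, hp, rfl, rfl⟩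
    refine ⟨fun t => d (p x) (p t) (p y), hd.comp₃ (.const _) hp (.const _), ?_, ?_⟩
    · exact ((hMd (p y) (p x)).2).symm
    · exact ((hMd (p x) (p y)).1).symm
  · rintro c e g ⟨p, hp, rfl, rfl⟩ ⟨q, hq, hpq, rfl⟩
    refine ⟨fun t => d (p t) (p y) (q t), hd.comp₃ hp (.const _) hq, ?_, ?_⟩
    · simp only [hpq, (hMd _ _).1]
    · exact ((hMd (q y) (p y)).2).symm
  · intro n f hf xs ys hxy
    choose P hP hxP hyP using hxy
    exact ⟨fun t => f fun i => P i t, .comp (.base hf) fun i => (hP i).comp_proj 0,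
      congrArg f (funext hxP), congrArg f (funext hyP)⟩

theorem Cg.exists_unaryPoly {d : A → A → A → A}
    (hd : PolyOp C 3 fun v => d (v 0) (v 1) (v 2)) (hMd : IsMalcev d) {x y c e : A}
    (h : Cg C x y c e) : ∃ p, IsUnaryPoly C p ∧ c = p x ∧ e = p y :=
  h _ (isCong_unaryPolyImage hd hMd x y) fun _ _ ⟨ha, hb⟩ => ⟨id, .proj 0, ha, hb⟩

end Congruence

section Centralizer

variable {A : Type} {C : Clone A} {d : A → A → A → A}

theorem IsMalcev.apply_eq_of_mem_delta (hMd : IsMalcev d) (T : A → A → A) {w : Fin 4 → A}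
    (hw : w ∈ Delta A) : d (T (w 1) (w 2)) (T (w 0) (w 2)) (T (w 0) (w 3)) = T (w 1) (w 3) := by
  rcases hw with h | h <;> rw [h]
  exacts [(hMd _ _).2, (hMd _ _).1]

theorem centralizes_cg_of_delta_identities (hd : PolyOp C 3 fun v => d (v 0) (v 1) (v 2))
    (hMd : IsMalcev d) (z : Fin 4 → A)
    (hz : ∀ F ∈ (PolClone C).ops 4, ∀ G ∈ (PolClone C).ops 4,
      (∀ w ∈ Delta A, F w = G w) → F z = G z) :
    Centralizes C (Cg C (z 0) (z 1)) (Cg C (z 2) (z 3)) (· = ·) := by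
  intro m k p hp a b u v hab huv hau
  choose P hP haP hbP using fun i => (hab i).exists_unaryPoly hd hMd
  choose Q hQ huQ hvQ using fun j => (huv j).exists_unaryPoly hd hMd
  obtain rfl : a = fun i => P i (z 0) := funext haP
  obtain rfl : b = fun i => P i (z 1) := funext hbP
  obtain rfl : u = fun j => Q j (z 2) := funext huQ
  obtain rfl : v = fun j => Q j (z 3) := funext hvQ
  set T : A → A → A := fun s t => p (Fin.append (fun i => P i s) (fun j => Q j t))
  have hT : ∀ i₁ i₂ : Fin 4, PolyOp C 4 fun w => T (w i₁) (w i₂) :=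
    PolyOp.comp_append hp hP hQ
  have key : d (T (z 1) (z 2)) (T (z 0) (z 2)) (T (z 0) (z 3)) = T (z 1) (z 3) :=
    hz _ (hd.comp₃ (hT 1 2) (hT 0 2) (hT 0 3)) _ (hT 1 3)
      fun w hw => hMd.apply_eq_of_mem_delta T hw
  have hau : T (z 0) (z 2) = T (z 0) (z 3) := hau
  calc T (z 1) (z 2) = d (T (z 1) (z 2)) (T (z 0) (z 2)) (T (z 0) (z 2)) := ((hMd _ _).1).symm
    _ = T (z 1) (z 3) := by rwa [← hau] at key

theorem isAlgSet_delta_polClone (hM : HasMalcevPoly C)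
    (hcomm : ∀ α β : A → A → Prop, IsCong C α → IsCong C β →
      (∃ a b : A, a ≠ b ∧ α a b) → (∃ a b : A, a ≠ b ∧ β a b) →
      ∃ a b : A, a ≠ b ∧ CommRel C α β a b) :
    IsAlgSet (PolClone C).ops 4 (Delta A) := by
  obtain ⟨d, hd, hMd⟩ := hM
  refine isAlgSet_of_identities fun z hz => ?_
  by_contra hzΔ
  obtain ⟨h01, h23⟩ : z 0 ≠ z 1 ∧ z 2 ≠ z 3 := not_or.mp hzΔ
  obtain ⟨a, b, hab, hcomm_ab⟩ := hcomm (Cg C (z 0) (z 1)) (Cg C (z 2) (z 3))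
    (isCong_congGen _) (isCong_congGen _) ⟨_, _, h01, cg_self _ _⟩ ⟨_, _, h23, cg_self _ _⟩
  exact hab (hcomm_ab _ isCong_eq (centralizes_cg_of_delta_identities hd hMd z hz))

end Centralizer

/-- If an algebra has a Mal'cev polynomial and `[α, β]` is strictly above
equality for all congruences `α, β` strictly above equality, then the clone of
polynomial operations is equationally additive. -/
theorem stmt16 {A : Type} (C : Clone A) (hM : HasMalcevPoly C)
    (hcomm : ∀ α β : A → A → Prop, IsCong C α → IsCong C β →
      (∃ a b : A, a ≠ b ∧ α a b) → (∃ a b : A, a ≠ b ∧ β a b) →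
      ∃ a b : A, a ≠ b ∧ CommRel C α β a b) :
    ∀ (n : ℕ) (X Y : Set (Fin n → A)),
      IsAlgSet (PolClone C).ops n X → IsAlgSet (PolClone C).ops n Y →
      IsAlgSet (PolClone C).ops n (X ∪ Y) :=
  eqAdditive_of_isAlgSet_delta (PolClone C) (isAlgSet_delta_polClone hM hcomm)
end

section
/- Let A be a finite subdirectly irreducible algebra with a Mal'cev polynomial whose monolith μ is non-Abelian ([μ,μ] ≠ 0_A). Let o ∈ A, U = o/μ its μ-class, k ∈ ℕ, D ⊆ A^k and l: D → U a function. Then for every finite subset T ⊆ D there exists a k-ary polynomial operation p of A such that p(t) = l(t) for all t ∈ T and p(x) ∈ U for all x ∈ A^k. -/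
/-! In a Mal'cev algebra the pairs `(q x, q y)`, `q` a unary polynomial, form the congruence
generated by `(x, y)`; since `μ` lies below every nontrivial congruence, any `μ`-related pair is
the image of any pair of distinct elements under some unary polynomial. Feeding such polynomials
into a failure of the term condition `C(μ, μ; 0)` and correcting with the Mal'cev polynomial `d`
gives a binary polynomial `m` with `o` absorbing and `m e e = e` for some `e ∈ U \ {o}`.
Products under `m` of separating polynomials give, for each point `x` of a finite set `T`, a
`U`-valued polynomial taking the value `e` at `x` and `o` on the rest of `T`; rescaled to `l x`
and added up with `d(·, o, ·)` they interpolate `l` on `T`. -/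

namespace PolyOp

variable {A : Type} {C : Clone A}

theorem comp₁ {q : A → A} (hq : PolyOp C 1 (fun w => q (w 0))) {n : ℕ}
    {g : (Fin n → A) → A} (hg : PolyOp C n g) : PolyOp C n (fun x => q (g x)) :=
  hq.comp fun _ => hg

theorem comp₂ {F : A → A → A} (hF : PolyOp C 2 (fun w => F (w 0) (w 1))) {n : ℕ}
    {g₀ g₁ : (Fin n → A) → A} (h₀ : PolyOp C n g₀) (h₁ : PolyOp C n g₁) :
    PolyOp C n (fun x => F (g₀ x) (g₁ x)) :=
  hF.comp (g := ![g₀, g₁]) fun i => by fin_cases i <;> assumption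

theorem comp₃_s19 {F : A → A → A → A} (hF : PolyOp C 3 (fun w => F (w 0) (w 1) (w 2))) {n : ℕ}
    {g₀ g₁ g₂ : (Fin n → A) → A} (h₀ : PolyOp C n g₀) (h₁ : PolyOp C n g₁)
    (h₂ : PolyOp C n g₂) : PolyOp C n (fun x => F (g₀ x) (g₁ x) (g₂ x)) :=
  hF.comp (g := ![g₀, g₁, g₂]) fun i => by fin_cases i <;> assumption

theorem append {m k n : ℕ} {p : (Fin (m + k) → A) → A} (hp : PolyOp C (m + k) p)
    {f : Fin m → (Fin n → A) → A} {g : Fin k → (Fin n → A) → A}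
    (hf : ∀ i, PolyOp C n (f i)) (hg : ∀ j, PolyOp C n (g j)) :
    PolyOp C n (fun x => p (Fin.append (fun i => f i x) (fun j => g j x))) := by
  have happ : ∀ x, Fin.append (fun i => f i x) (fun j => g j x) = fun i => Fin.append f g i x :=
    fun x => funext fun i => Fin.addCases (fun i => by simp) (fun j => by simp) i
  simp only [happ]
  exact hp.comp (Fin.addCases (by simpa using hf) (by simpa using hg))

theorem compatible {θ : A → A → Prop} (hθ : IsCong C θ) {n : ℕ} {f : (Fin n → A) → A}
    (hf : PolyOp C n f) {x y : Fin n → A} (h : ∀ i, θ (x i) (y i)) : θ (f x) (f y) := by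
  induction hf with
  | base hf => exact hθ.2 _ _ hf x y h
  | const a => exact hθ.1.refl a
  | proj i => exact h i
  | comp _ _ ihf ihg => exact ihf fun i => ihg i h

theorem compatible₁ {θ : A → A → Prop} (hθ : IsCong C θ) {q : A → A}
    (hq : PolyOp C 1 (fun w => q (w 0))) {a a' : A} (h : θ a a') : θ (q a) (q a') :=
  hq.compatible hθ (x := ![a]) (y := ![a']) fun i => by fin_cases i; exact h

theorem compatible₂ {θ : A → A → Prop} (hθ : IsCong C θ) {F : A → A → A}
    (hF : PolyOp C 2 (fun w => F (w 0) (w 1))) {a a' b b' : A} (ha : θ a a') (hb : θ b b') :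
    θ (F a b) (F a' b') :=
  hF.compatible hθ (x := ![a, b]) (y := ![a', b']) fun i => by fin_cases i <;> assumption

end PolyOp

section Malcev

variable {A : Type} {C : Clone A}

/-- Mal'cev's description of the principal congruence `Cg(x, y)`. -/
def polyCg (C : Clone A) (x y s t : A) : Prop :=
  ∃ q : A → A, PolyOp C 1 (fun w => q (w 0)) ∧ q x = s ∧ q y = t

theorem isCong_polyCg (hM : HasMalcevPoly C) (x y : A) : IsCong C (polyCg C x y) := by
  obtain ⟨d, hd, hdM⟩ := hM
  refine ⟨⟨fun a => ⟨fun _ => a, .const a, rfl, rfl⟩, ?_, ?_⟩, ?_⟩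
  · rintro a b ⟨q, hq, rfl, rfl⟩
    exact ⟨fun z => d (q x) (q z) (q y), hd.comp₃_s19 (.const _) hq (.const _),
      (hdM _ _).2, (hdM _ _).1⟩
  · rintro a b c ⟨q, hq, rfl, rfl⟩ ⟨q', hq', hq'x, rfl⟩
    exact ⟨fun z => d (q z) (q y) (q' z), hd.comp₃_s19 hq (.const _) hq',
      by simp only [hq'x, (hdM _ _).1], (hdM _ _).2⟩
  · intro n F hF a b hab
    choose q hq hqx hqy using hab
    exact ⟨fun z => F (fun i => q i z), (PolyOp.base hF).comp hq,
      congrArg F (funext hqx), congrArg F (funext hqy)⟩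

/-- For nontrivial `μ` this says that `μ` is the monolith. -/
def IsBelowNontrivialCongs (C : Clone A) (μ : A → A → Prop) : Prop :=
  ∀ θ : A → A → Prop, IsCong C θ → (∃ a b : A, a ≠ b ∧ θ a b) → ∀ x y : A, μ x y → θ x y

variable {μ : A → A → Prop}

theorem IsBelowNontrivialCongs.polyCg (hμ : IsBelowNontrivialCongs C μ) (hM : HasMalcevPoly C)
    {x y s t : A} (hxy : x ≠ y) (hst : μ s t) : polyCg C x y s t :=
  hμ _ (isCong_polyCg hM x y) ⟨x, y, hxy, id, .proj 0, rfl, rfl⟩ s t hst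

theorem not_centralizes_eq_of_commRel {a b : A} (hab : a ≠ b) (h : CommRel C μ μ a b) :
    ¬ Centralizes C μ μ (· = ·) := fun hc =>
  hab (h _ ⟨eq_equivalence, fun _ f _ _ _ hxy => congrArg f (funext hxy)⟩ hc)

end Malcev

section NonAbelian

variable {A : Type} {C : Clone A} {μ : A → A → Prop}

theorem exists_binaryPoly_of_not_centralizes (hM : HasMalcevPoly C)
    (hmono : IsBelowNontrivialCongs C μ) (hnc : ¬ Centralizes C μ μ (· = ·))
    {o e : A} (hoe : o ≠ e) :
    ∃ P : A → A → A, PolyOp C 2 (fun w => P (w 0) (w 1)) ∧ P e o = P o o ∧ P e e ≠ P o e := by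
  simp only [Centralizes, not_forall] at hnc
  obtain ⟨m, k, p, hp, a, b, u, v, hab, huv, hau, hbu⟩ := hnc
  choose f hf hfo hfe using fun i => hmono.polyCg hM hoe (hab i)
  choose g hg hgo hge using fun j => hmono.polyCg hM hoe (huv j)
  have hfo' : (fun i => f i o) = a := funext hfo
  have hfe' : (fun i => f i e) = b := funext hfe
  have hgo' : (fun j => g j o) = u := funext hgo
  have hge' : (fun j => g j e) = v := funext hge
  refine ⟨fun s t => p (Fin.append (fun i => f i t) (fun j => g j s)),
    hp.append (fun i => (hf i).comp₁ (.proj 1)) (fun j => (hg j).comp₁ (.proj 0)), ?_, ?_⟩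
  · simp only [hfo', hgo', hge']
    exact hau.symm
  · simpa only [hfe', hgo', hge'] using Ne.symm hbu

theorem exists_absorbingPoly (hM : HasMalcevPoly C) (hmono : IsBelowNontrivialCongs C μ)
    (hnc : ¬ Centralizes C μ μ (· = ·)) {o e : A} (hoe : o ≠ e) (he : μ o e) :
    ∃ m : A → A → A, PolyOp C 2 (fun w => m (w 0) (w 1)) ∧
      (∀ z, m o z = o) ∧ (∀ z, m z o = o) ∧ m e e = e := by
  obtain ⟨P, hP, hPeo, hPee⟩ := exists_binaryPoly_of_not_centralizes hM hmono hnc hoe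
  obtain ⟨r, hr, hro, hre⟩ := hmono.polyCg hM (Ne.symm hPee) he
  obtain ⟨d, hd, hdM⟩ := hM
  set K : A → A → A := fun s t => d (P s t) (P o t) (P o e)
  have hK : PolyOp C 2 (fun w => K (w 0) (w 1)) :=
    hd.comp₃_s19 hP (hP.comp₂ (.const o) (.proj 1)) (.const _)
  have hKo : ∀ t, K o t = P o e := fun t => (hdM _ _).2
  have hKeo : K e o = P o e := by simp only [K, hPeo, (hdM _ _).2]
  have hKee : K e e = P e e := (hdM _ _).1
  refine ⟨fun s t => d (r (K s t)) (r (K s o)) o,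
    hd.comp₃_s19 (hr.comp₁ hK) (hr.comp₁ (hK.comp₂ (.proj 0) (.const o))) (.const o), ?_, ?_, ?_⟩
  · intro z
    simp only [hKo, hro, (hdM _ _).1]
  · intro z
    exact (hdM _ _).2
  · simp only [hKee, hKeo, hre, hro, (hdM _ _).1]

end NonAbelian

section Interpolation

variable {A : Type} {C : Clone A} {μ : A → A → Prop}

theorem exists_indicatorPoly (hM : HasMalcevPoly C) (hμ : IsCong C μ)
    (hmono : IsBelowNontrivialCongs C μ) (hnc : ¬ Centralizes C μ μ (· = ·))
    {o e : A} (hoe : o ≠ e) (he : μ o e) {k : ℕ} (x : Fin k → A) (S : Finset (Fin k → A))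
    (hxS : x ∉ S) :
    ∃ g : (Fin k → A) → A, PolyOp C k g ∧ g x = e ∧ (∀ y ∈ S, g y = o) ∧ ∀ z, μ o (g z) := by
  classical
  obtain ⟨m, hm, hmo, hmo', hme⟩ := exists_absorbingPoly hM hmono hnc hoe he
  induction S using Finset.induction_on with
  | empty => exact ⟨fun _ => e, .const e, rfl, by simp, fun _ => he⟩
  | insert y S hyS ih =>
    rw [Finset.mem_insert, not_or] at hxS
    obtain ⟨hxy, hxS⟩ := hxS
    obtain ⟨g, hg, hgx, hgS, hgU⟩ := ih hxS
    obtain ⟨i, hi⟩ := Function.ne_iff.mp (Ne.symm hxy)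
    obtain ⟨q, hq, hqy, hqx⟩ := hmono.polyCg hM hi he
    refine ⟨fun z => m (g z) (q (z i)), hm.comp₂ hg (hq.comp₁ (.proj i)), ?_, ?_, ?_⟩
    · simp only [hgx, hqx, hme]
    · refine (Finset.forall_mem_insert _ _ _).mpr ⟨?_, fun y' hy' => ?_⟩
      · simp only [hqy, hmo']
      · simp only [hgS y' hy', hmo]
    · intro z
      simpa only [hmo] using hm.compatible₂ hμ (hgU z) (hμ.1.refl (q (z i)))

theorem exists_bumpPoly (hM : HasMalcevPoly C) (hμ : IsCong C μ)
    (hmono : IsBelowNontrivialCongs C μ) (hnc : ¬ Centralizes C μ μ (· = ·))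
    {o e : A} (hoe : o ≠ e) (he : μ o e) {k : ℕ} (x : Fin k → A) (S : Finset (Fin k → A))
    (hxS : x ∉ S) {v : A} (hv : μ o v) :
    ∃ b : (Fin k → A) → A, PolyOp C k b ∧ b x = v ∧ (∀ y ∈ S, b y = o) ∧ ∀ z, μ o (b z) := by
  obtain ⟨g, hg, hgx, hgS, hgU⟩ := exists_indicatorPoly hM hμ hmono hnc hoe he x S hxS
  obtain ⟨s, hs, hso, hse⟩ := hmono.polyCg hM hoe hv
  refine ⟨fun z => s (g z), hs.comp₁ hg, by simp only [hgx, hse],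
    fun y hy => by simp only [hgS y hy, hso], fun z => ?_⟩
  simpa only [hso] using hs.compatible₁ hμ (hgU z)

theorem exists_poly_interpolating (hM : HasMalcevPoly C) (hμ : IsCong C μ)
    (hmono : IsBelowNontrivialCongs C μ) (hnc : ¬ Centralizes C μ μ (· = ·))
    {o e : A} (hoe : o ≠ e) (he : μ o e) {k : ℕ} (T : Finset (Fin k → A))
    (f : (Fin k → A) → A) (hf : ∀ x ∈ T, μ o (f x)) :
    ∃ p : (Fin k → A) → A, PolyOp C k p ∧ (∀ x ∈ T, p x = f x) ∧ ∀ z, μ o (p z) := by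
  classical
  choose b hb hbx hbT hbU using fun x (hx : x ∈ T) =>
    exists_bumpPoly hM hμ hmono hnc hoe he x (T.erase x) (T.notMem_erase x) (hf x hx)
  obtain ⟨d, hd, hdM⟩ := hM
  set add : A → A → A := fun a c => d a o c
  have hadd : PolyOp C 2 (fun w => add (w 0) (w 1)) := hd.comp₃_s19 (.proj 0) (.const o) (.proj 1)
  have hadd_o : ∀ a, add a o = a := fun a => (hdM a o).1
  have ho_add : ∀ a, add o a = a := fun a => (hdM a o).2
  suffices h : ∀ S ⊆ T, ∃ p : (Fin k → A) → A, PolyOp C k p ∧ (∀ x ∈ S, p x = f x) ∧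
      (∀ x ∈ T, x ∉ S → p x = o) ∧ ∀ z, μ o (p z) by
    obtain ⟨p, hp, hpT, -, hpU⟩ := h T subset_rfl
    exact ⟨p, hp, hpT, hpU⟩
  intro S
  induction S using Finset.induction_on with
  | empty => exact fun _ => ⟨fun _ => o, .const o, by simp, fun _ _ _ => rfl, fun _ => hμ.1.refl o⟩
  | insert x S hxS ih =>
    intro hST
    obtain ⟨hxT, hST⟩ := Finset.insert_subset_iff.mp hST
    obtain ⟨p, hp, hpS, hpT, hpU⟩ := ih hST
    have hbS : ∀ y ∈ T, y ≠ x → b x hxT y = o := fun y hyT hyx =>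
      hbT x hxT y (Finset.mem_erase_of_ne_of_mem hyx hyT)
    refine ⟨fun z => add (p z) (b x hxT z), hadd.comp₂ hp (hb x hxT), ?_, ?_, fun z => ?_⟩
    · refine (Finset.forall_mem_insert _ _ _).mpr ⟨?_, fun y hy => ?_⟩
      · simp only [hpT x hxT hxS, hbx, ho_add]
      · simp only [hpS y hy, hbS y (hST hy) (ne_of_mem_of_not_mem hy hxS), hadd_o]
    · intro y hyT hy
      rw [Finset.mem_insert, not_or] at hy
      simp only [hpT y hyT hy.2, hbS y hyT hy.1, hadd_o]
    · simpa only [hadd_o] using hadd.compatible₂ hμ (hpU z) (hbU x hxT z)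

end Interpolation

theorem stmt19_general {A : Type} (C : Clone A) (hM : HasMalcevPoly C)
    (μ : A → A → Prop) (hμ : IsCong C μ)
    (hmono : ∀ θ : A → A → Prop, IsCong C θ → (∃ a b : A, a ≠ b ∧ θ a b) →
      ∀ x y : A, μ x y → θ x y)
    (hnab : ∃ a b : A, a ≠ b ∧ CommRel C μ μ a b)
    (o : A) (k : ℕ) (D : Set (Fin k → A)) (l : D → A) (hl : ∀ t : D, μ o (l t)) :
    ∀ T : Set (Fin k → A), T ⊆ D → T.Finite →
      ∃ p : (Fin k → A) → A, p ∈ (PolClone C).ops k ∧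
        (∀ t : D, (t : Fin k → A) ∈ T → p t = l t) ∧
        ∀ x : Fin k → A, μ o (p x) := by
  classical
  intro T _ hT
  by_cases hU : ∃ e, o ≠ e ∧ μ o e
  · obtain ⟨e, hoe, he⟩ := hU
    obtain ⟨a, b, hab, hcomm⟩ := hnab
    set f : (Fin k → A) → A := fun x => if h : x ∈ D then l ⟨x, h⟩ else o
    have hf : ∀ x ∈ hT.toFinset, μ o (f x) := fun x _ => by
      by_cases hx : x ∈ D <;> simp [f, hx, hl, hμ.1.refl o]
    obtain ⟨p, hp, hpT, hpU⟩ := exists_poly_interpolating hM hμ hmono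
      (not_centralizes_eq_of_commRel hab hcomm) hoe he hT.toFinset f hf
    exact ⟨p, hp, fun t ht => by simpa [f] using hpT t (hT.mem_toFinset.mpr ht), hpU⟩
  · simp only [not_exists, not_and] at hU
    exact ⟨fun _ => o, .const o, fun t _ => Classical.byContradiction fun h => hU _ h (hl t),
      fun _ => hμ.1.refl o⟩

/-- Interpolation in a finite subdirectly irreducible algebra with a Mal'cev
polynomial and non-Abelian monolith `μ`: any `U`-valued function defined on
`D ⊆ A^k` (where `U = o/μ`) can be interpolated on every finite subset of `D`
by a `k`-ary polynomial whose image is contained in `U`. -/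
theorem stmt19 {A : Type} [Finite A] (C : Clone A) (hM : HasMalcevPoly C)
    (μ : A → A → Prop) (hμ : IsCong C μ)
    (hnt : ∃ a b : A, a ≠ b ∧ μ a b)
    (hmono : ∀ θ : A → A → Prop, IsCong C θ → (∃ a b : A, a ≠ b ∧ θ a b) →
      ∀ x y : A, μ x y → θ x y)
    (hnab : ∃ a b : A, a ≠ b ∧ CommRel C μ μ a b)
    (o : A) (k : ℕ) (D : Set (Fin k → A)) (l : D → A) (hl : ∀ t : D, μ o (l t)) :
    ∀ T : Set (Fin k → A), T ⊆ D → T.Finite →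
      ∃ p : (Fin k → A) → A, p ∈ (PolClone C).ops k ∧
        (∀ t : D, (t : Fin k → A) ∈ T → p t = l t) ∧
        ∀ x : Fin k → A, μ o (p x) :=
  stmt19_general C hM μ hμ hmono hnab o k D l hl
end
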